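/- arXiv:2501.00130 — 2 statements merged into one kernel-verified Lean document; each statement's English description precedes it below -/
import Mathlib

section
/- Let u_ρ ∈ ℝⁿ (ρ in a finite index set R) be vectors with ⟨m, u_ρ⟩ ∈ ℤ for all m ∈ ℤⁿ, let θ ∈ ℝⁿ, let m ∈ ℤⁿ, and let a : R → ℤ. Define S = { k ∈ ℝⁿ : ⟨k, u_ρ⟩ ≥ ⌊-⟨θ, u_ρ⟩⌋ for all ρ ∈ R, and there exists α ∈ R with ⟨k + m, u_α⟩ < -a_α }. Then S is star-shaped with center -θ: if S is nonempty then -θ ∈ S, and for every y ∈ S the segment from y to -θ is contained in S. -/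
/-- The set `S = P_d \ (P_A - m)` is star-shaped with center `-θ`. -/
theorem stmt_1 (n : ℕ) (R : Type) [Fintype R] (u : R → Fin n → ℝ) (θ : Fin n → ℝ)
    (m : Fin n → ℤ) (a : R → ℤ)
    (hint : ∀ (m' : Fin n → ℤ) (ρ : R), ∃ z : ℤ, ∑ i, (m' i : ℝ) * u ρ i = (z : ℝ)) :
    let S : Set (Fin n → ℝ) :=
      {k | (∀ ρ, ∑ i, k i * u ρ i ≥ ((⌊-∑ i, θ i * u ρ i⌋ : ℤ) : ℝ)) ∧
        ∃ α, ∑ i, (k i + (m i : ℝ)) * u α i < -(a α : ℝ)}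
    (S.Nonempty → (-θ) ∈ S) ∧ ∀ y ∈ S, segment ℝ y (-θ) ⊆ S := by
  intro S
  have hneg : ∀ ρ, ∑ i, (-θ) i * u ρ i = -∑ i, θ i * u ρ i := by
    intro ρ
    rw [← Finset.sum_neg_distrib]
    apply Finset.sum_congr rfl
    intro i _
    simp [neg_mul]
  have h1θ : ∀ ρ, ∑ i, (-θ) i * u ρ i ≥ ((⌊-∑ i, θ i * u ρ i⌋ : ℤ) : ℝ) := by
    intro ρ
    rw [hneg]
    exact Int.floor_le _
  have key : ∀ y ∈ S, ∃ α, (∑ i, ((-θ) i + (m i : ℝ)) * u α i < -(a α : ℝ)) ∧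
      (∑ i, (y i + (m i : ℝ)) * u α i < -(a α : ℝ)) := by
    rintro y ⟨hy1, α, hy2⟩
    obtain ⟨z, hz⟩ := hint m α
    refine ⟨α, ?_, hy2⟩
    have hsum : ∀ k : Fin n → ℝ,
        ∑ i, (k i + (m i : ℝ)) * u α i = (∑ i, k i * u α i) + (z : ℝ) := by
      intro k
      rw [← hz, ← Finset.sum_add_distrib]
      apply Finset.sum_congr rfl
      intro i _
      ring
    have h1 := hy1 α
    rw [hsum] at hy2 ⊢
    rw [hneg]
    have hfloor : ((⌊-∑ i, θ i * u α i⌋ : ℤ) : ℝ) + (z : ℝ) < -(a α : ℝ) := by linarith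
    have hintle : (⌊-∑ i, θ i * u α i⌋ + z : ℤ) < -a α := by exact_mod_cast hfloor
    have h2 : (⌊-∑ i, θ i * u α i⌋ + z + 1 : ℤ) ≤ -a α := hintle
    have h3 : -∑ i, θ i * u α i < (⌊-∑ i, θ i * u α i⌋ : ℝ) + 1 := Int.lt_floor_add_one _
    have h5 : ((⌊-∑ i, θ i * u α i⌋ + z + 1 : ℤ) : ℝ) ≤ ((-a α : ℤ) : ℝ) := by exact_mod_cast h2
    push_cast at h5
    linarith
  constructor
  · rintro ⟨y, hy⟩
    obtain ⟨α, hα, -⟩ := key y hy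
    exact ⟨h1θ, α, hα⟩
  · rintro y hy x hx
    obtain ⟨t1, t2, ht1, ht2, htsum, hx⟩ := hx
    obtain ⟨α, hα, hyα⟩ := key y hy
    obtain ⟨hy1, -⟩ := hy
    have hxi : ∀ i, x i = t1 * y i + t2 * (-θ) i := by
      intro i; rw [← hx]; simp
    constructor
    · intro ρ
      have hx1 : ∑ i, x i * u ρ i = t1 * (∑ i, y i * u ρ i) + t2 * (∑ i, (-θ) i * u ρ i) := by
        rw [Finset.mul_sum, Finset.mul_sum, ← Finset.sum_add_distrib]
        apply Finset.sum_congr rfl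
        intro i _
        rw [hxi i]; ring
      have hA := hy1 ρ
      have hB := h1θ ρ
      rw [hx1]
      have hF : t1 * ((⌊-∑ i, θ i * u ρ i⌋ : ℤ) : ℝ) + t2 * ((⌊-∑ i, θ i * u ρ i⌋ : ℤ) : ℝ)
          = ((⌊-∑ i, θ i * u ρ i⌋ : ℤ) : ℝ) := by rw [← add_mul, htsum, one_mul]
      linarith [mul_le_mul_of_nonneg_left hA ht1, mul_le_mul_of_nonneg_left hB ht2]
    · refine ⟨α, ?_⟩
      have hx2 : ∑ i, (x i + (m i : ℝ)) * u α i =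
          t1 * (∑ i, (y i + (m i : ℝ)) * u α i) + t2 * (∑ i, ((-θ) i + (m i : ℝ)) * u α i) := by
        rw [Finset.mul_sum, Finset.mul_sum, ← Finset.sum_add_distrib]
        apply Finset.sum_congr rfl
        intro i _
        rw [hxi i]
        linear_combination (-((m i : ℝ) * u α i)) * htsum
      rw [hx2]
      rcases eq_or_lt_of_le ht1 with h0 | hpos
      · have ht2' : t2 = 1 := by linarith
        rw [← h0, ht2']
        simpa using hα
      · have hs1 : t1 * (∑ i, (y i + (m i : ℝ)) * u α i) < t1 * (-(a α : ℝ)) :=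
          mul_lt_mul_of_pos_left hyα hpos
        have hs2 : t2 * (∑ i, ((-θ) i + (m i : ℝ)) * u α i) ≤ t2 * (-(a α : ℝ)) :=
          mul_le_mul_of_nonneg_left hα.le ht2
        have hF : t1 * (-(a α : ℝ)) + t2 * (-(a α : ℝ)) = -(a α : ℝ) := by
          rw [← add_mul, htsum, one_mul]
        linarith
end

section
/- Let π : ℝⁿ → ℝᵏ be a linear map, let the coordinates of ℝⁿ be partitioned into index sets P and Q, and suppose that the restriction of π to the coordinate subspace ℝ^Q is surjective onto ℝᵏ. Then π([-1,0]^P × {0}) + π({0} × (-1,0)^Q) ⊆ π((-1,0]^P × (-1,0]^Q). That is, the Minkowski sum of the closed zonotope on the P-coordinates and the open zonotope on the Q-coordinates is contained in the half-open zonotope. -/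
/-- The Minkowski sum of the closed zonotope on the `P`-coordinates and the open zonotope on
the `Q`-coordinates is contained in the half-open zonotope, when the projection restricted to
the `Q`-coordinates is surjective. -/
theorem stmt_13 (k : ℕ) (P Q : Type) [Fintype P] [Fintype Q]
    (π : ((P → ℝ) × (Q → ℝ)) →ₗ[ℝ] (Fin k → ℝ))
    (hsurj : Function.Surjective fun q : Q → ℝ => π (0, q)) :
    ∀ x ∈ π '' {p | (∀ i, p.1 i ∈ Set.Icc (-1 : ℝ) 0) ∧ p.2 = 0},
    ∀ y ∈ π '' {p | p.1 = 0 ∧ ∀ j, p.2 j ∈ Set.Ioo (-1 : ℝ) 0},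
    x + y ∈ π '' {p | (∀ i, p.1 i ∈ Set.Ioc (-1 : ℝ) 0) ∧
      (∀ j, p.2 j ∈ Set.Ioc (-1 : ℝ) 0)} := by
  rintro x ⟨p, ⟨hp1, hp2⟩, rfl⟩ y ⟨q, ⟨hq1, hq2⟩, rfl⟩
  obtain ⟨c, hc⟩ := hsurj (π (p.1, 0))
  simp only at hc
  -- choose ε
  set m : Q → ℝ := fun j => min (-(q.2 j)) (1 + q.2 j) / (|c j| + 1) with hm
  set S : Finset ℝ := insert (1 : ℝ) (Finset.univ.image m) with hS
  have hSne : S.Nonempty := ⟨1, by simp [hS]⟩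
  set ε : ℝ := S.min' hSne with hε
  have hεpos : 0 < ε := by
    rw [hε, Finset.lt_min'_iff]
    intro b hb
    rw [hS, Finset.mem_insert] at hb
    rcases hb with rfl | hb
    · norm_num
    · obtain ⟨j, _, rfl⟩ := Finset.mem_image.mp hb
      have h1 := (hq2 j).1
      have h2 := (hq2 j).2
      have hd : 0 < |c j| + 1 := by positivity
      apply div_pos _ hd
      simp only [lt_min_iff]
      constructor <;> linarith
  have hε1 : ε ≤ 1 := Finset.min'_le _ _ (by simp [hS])
  have hεm : ∀ j, ε ≤ m j := fun j =>
    Finset.min'_le _ _ (by simp [hS, Finset.mem_image])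
  refine ⟨((1 - ε) • p.1, q.2 + ε • c), ⟨?_, ?_⟩, ?_⟩
  · intro i
    have h1 := (hp1 i).1
    have h2 := (hp1 i).2
    simp only [Set.mem_Ioc, Pi.smul_apply, smul_eq_mul]
    constructor <;> nlinarith
  · intro j
    have h1 := (hq2 j).1
    have h2 := (hq2 j).2
    have hd : 0 < |c j| + 1 := by positivity
    have hεj : ε * (|c j| + 1) ≤ min (-(q.2 j)) (1 + q.2 j) := by
      have := hεm j
      rw [hm] at this
      exact (le_div_iff₀ hd).mp this
    have hmin1 : min (-(q.2 j)) (1 + q.2 j) ≤ -(q.2 j) := min_le_left _ _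
    have hmin2 : min (-(q.2 j)) (1 + q.2 j) ≤ 1 + q.2 j := min_le_right _ _
    have habs1 : c j ≤ |c j| := le_abs_self _
    have habs2 : -(|c j|) ≤ c j := neg_abs_le _
    have habs0 : 0 ≤ |c j| := abs_nonneg _
    simp only [Set.mem_Ioc, Pi.add_apply, Pi.smul_apply, smul_eq_mul]
    constructor <;> nlinarith
  · have hps : ((1 - ε) • p.1, q.2 + ε • c) =
        (1 - ε) • (p.1, (0 : Q → ℝ)) + (0, q.2) + ε • ((0 : P → ℝ), c) := by
      ext <;> simp
    rw [hps, map_add, map_add, map_smul, map_smul, hc]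
    have hπp : π p = π (p.1, 0) := by
      conv_lhs => rw [show p = (p.1, p.2) from rfl, hp2]
    have hπq : π q = π (0, q.2) := by
      conv_lhs => rw [show q = (q.1, q.2) from rfl, hq1]
    rw [hπp, hπq]
    module
end
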